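/- Let G = (V,E,w) be an asymptotically flat graph of dimension n ≥ 2 with non-negative Ricci curvature, i.e. κ(x,y) ≥ 0 for every edge {x,y} ∈ E. Then there exists a finite set W ⊆ V such that w(e) = 1 for every edge e ∈ E whose endpoints both lie outside W. -/

import Mathlib

open Filter Topology

noncomputable section

namespace PMT

/-- The `i`-th standard unit vector in `ℤⁿ`. -/
def e (n : ℕ) (i : Fin n) : Fin n → ℤ := fun j => if j = i then 1 else 0

/-- The grid graph on `ℤⁿ`: `x ∼ y` iff `‖x − y‖₁ = 1`. -/
def grid (n : ℕ) : SimpleGraph (Fin n → ℤ) where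
  Adj x y := (∑ i, |x i - y i|) = 1
  symm := by
    constructor
    intro x y h
    show (∑ i, |y i - x i|) = 1
    have h' : ∀ i ∈ Finset.univ, |y i - x i| = |x i - y i| :=
      fun i _ => abs_sub_comm _ _
    rw [Finset.sum_congr rfl h']
    exact h
  loopless := by constructor; intro x h; simp at h

/-- The graph Laplacian `Δf(x) = Σ_{y∼x} w(x,y)(f(y)−f(x))` of an integer-valued function. -/
def lap {V : Type*} (G : SimpleGraph V) (w : V → V → ℝ) (f : V → ℤ) (x : V) : ℝ :=
  ∑ᶠ y ∈ {y | G.Adj x y}, w x y * ((f y : ℝ) - (f x : ℝ))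

/-- `f : V → ℤ` is 1-Lipschitz with respect to the combinatorial graph distance. -/
def Lip1 {V : Type*} (G : SimpleGraph V) (f : V → ℤ) : Prop :=
  ∀ x y, |f x - f y| ≤ (G.dist x y : ℤ)

/-- Ollivier curvature of the pair `(x, y)`:
`κ(x,y) = inf {Δf(x) − Δf(y) | f : V → ℤ, f 1-Lipschitz, f(y) = f(x) + 1}`. -/
def kappa {V : Type*} (G : SimpleGraph V) (w : V → V → ℝ) (x y : V) : ℝ :=
  sInf {r | ∃ f : V → ℤ, Lip1 G f ∧ f y = f x + 1 ∧ r = lap G w f x - lap G w f y}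

/-- Scalar curvature `R(x) = Σ_{y∼x} κ(x,y)`. -/
def scal {V : Type*} (G : SimpleGraph V) (w : V → V → ℝ) (x : V) : ℝ :=
  ∑ᶠ y ∈ {y | G.Adj x y}, kappa G w x y

/-- A weighted grid graph `(ℤⁿ, w)`: symmetric weights, positive on edges. -/
structure GridWeight (n : ℕ) where
  w : (Fin n → ℤ) → (Fin n → ℤ) → ℝ
  symm : ∀ x y, w x y = w y x
  pos : ∀ x y, (grid n).Adj x y → 0 < w x y

/-- The quantity `Abs(x)` measuring the distortion from the standard grid graph. -/
def Absf (n : ℕ) (w : (Fin n → ℤ) → (Fin n → ℤ) → ℝ) (x : Fin n → ℤ) : ℝ :=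
  ∑ i, ∑ j, if i ≠ j then
      (|w x (x + e n i) - w (x + e n j) (x + e n j + e n i)| +
       |w x (x + e n i) - w (x - e n j) (x - e n j + e n i)| +
       |w x (x - e n i) - w (x + e n j) (x + e n j - e n i)| +
       |w x (x - e n i) - w (x - e n j) (x - e n j - e n i)|)
    else 0

/-- The `ℓ^∞` norm `‖x‖_∞` of `x ∈ ℤⁿ`, as a natural number. -/
def nInf {n : ℕ} (x : Fin n → ℤ) : ℕ := Finset.univ.sup fun i => (x i).natAbs

/-- The cube `Q_r = {y ∈ ℤⁿ : ‖y‖∞ ≤ r}` as a finset. -/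
def Qr (n r : ℕ) : Finset (Fin n → ℤ) := Finset.Icc (fun _ => -(r : ℤ)) (fun _ => (r : ℤ))

/-- `Σ_{e ∈ E_r} w(e)`: the sum of weights of edges with exactly one endpoint in `Q_r`
(each such edge is counted once, via its endpoint inside `Q_r`). -/
def ErSum (n : ℕ) (w : (Fin n → ℤ) → (Fin n → ℤ) → ℝ) (r : ℕ) : ℝ :=
  ∑ x ∈ Qr n r, ∑ i,
    ((if x + e n i ∉ Qr n r then w x (x + e n i) else 0) +
     (if x - e n i ∉ Qr n r then w x (x - e n i) else 0))

/-- `Σ_{τ ∈ Ẽ_r} w(τ)`: the sum of weights of edges joining the sphere `S_{r+1}` to the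
sphere `S_{r+2}` (each such edge is counted once, via its endpoint in `S_{r+1}`). -/
def TErSum (n : ℕ) (w : (Fin n → ℤ) → (Fin n → ℤ) → ℝ) (r : ℕ) : ℝ :=
  ∑ x ∈ Qr n (r + 1), if nInf x = r + 1 then
      (∑ i, ((if nInf (x + e n i) = r + 2 then w x (x + e n i) else 0) +
             (if nInf (x - e n i) = r + 2 then w x (x - e n i) else 0)))
    else 0

/-- The weighted grid graph `(ℤⁿ, w)` is asymptotically flat: there is `p > n` with
`w = 1 + o(1)`, `Abs(x) = O(‖x‖∞^{−p})` and `|R(x)| = O(‖x‖∞^{−p})` as `‖x‖∞ → ∞`. -/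
def AsympFlatGrid (n : ℕ) (W : GridWeight n) : Prop :=
  ∃ p : ℝ, (n : ℝ) < p ∧
    (∀ ε : ℝ, 0 < ε → ∃ M : ℕ, ∀ x y, (grid n).Adj x y → M ≤ nInf x → |W.w x y - 1| ≤ ε) ∧
    (∃ C : ℝ, ∃ M : ℕ, 0 < M ∧ ∀ x, M ≤ nInf x → Absf n W.w x ≤ C * (nInf x : ℝ) ^ (-p)) ∧
    (∃ C : ℝ, ∃ M : ℕ, 0 < M ∧ ∀ x, M ≤ nInf x → |scal (grid n) W.w x| ≤ C * (nInf x : ℝ) ^ (-p))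

/-- A weighted graph: simple, undirected, connected, locally finite,
with symmetric positive edge weights. -/
structure WGraph (V : Type) where
  G : SimpleGraph V
  w : V → V → ℝ
  symm : ∀ x y, w x y = w y x
  pos : ∀ x y, G.Adj x y → 0 < w x y
  locFin : ∀ x : V, {y | G.Adj x y}.Finite
  conn : G.Connected

/-- The weighted graph `W` is asymptotically flat with asymptotic model the
asymptotically flat weighted grid graph `Wg` on `ℤⁿ`: outside a finite set `K`, `W` is
weighted isomorphic (via `Φ`) to the complement of the cube `Q_r` in `(ℤⁿ, Wg.w)`, and
there are no edges between `K` and `Φ⁻¹(ℤⁿ ∖ Q_{r+1})`. -/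
def AsympFlatPair {V : Type} (n : ℕ) (W : WGraph V) (Wg : GridWeight n) : Prop :=
  AsympFlatGrid n Wg ∧
  ∃ (K : Set V) (r : ℕ) (Φ : V → (Fin n → ℤ)),
    K.Finite ∧ 0 < r ∧
    Set.BijOn Φ Kᶜ {x | r < nInf x} ∧
    (∀ u v, u ∉ K → v ∉ K → (W.G.Adj u v ↔ (grid n).Adj (Φ u) (Φ v))) ∧
    (∀ u v, u ∉ K → v ∉ K → W.G.Adj u v → W.w u v = Wg.w (Φ u) (Φ v)) ∧
    (∀ u v, u ∈ K → v ∉ K → r + 1 < nInf (Φ v) → ¬ W.G.Adj u v)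

/-!
Write `D_l(z) = w(z, z + e_l) - w(z, z - e_l)` (`weightAsymm`). Far out, for directions `i ≠ j`
and signs `σ, τ`, the function `z ↦ σ (z_i - x_i) + τ (z_j - x_j)`, cut off to `-2` near the
finite part, is 1-Lipschitz and has Laplacian `σ D_i + τ D_j` at `x` and at `y = x + τ e_j`.
Non-negative curvature of the edge `xy` says that `σ D_i + τ D_j` does not increase from `x` to
`y`, hence along the whole ray `x + k τ e_j`. Choosing `j` different from a coordinate where `x`
attains `‖x‖∞` (possible as `n ≥ 2`) keeps the ray far out, and since the weights tend to `1` the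
quantity tends to `0` along it. So `σ D_i(x) + τ D_j(x) ≥ 0` for all four signs, that is,
`D_i(x) = D_j(x) = 0`. Balanced weights at every far point make the weights constant along each
outward coordinate ray, hence equal to their limit `1`.
-/

section

variable {n : ℕ}

lemma e_apply (i j : Fin n) : e n i j = if j = i then 1 else 0 := rfl

lemma dotProduct_e (a : Fin n → ℤ) (l : Fin n) : a ⬝ᵥ e n l = a l := by
  simp [dotProduct, e]

lemma add_smul_e_apply (x : Fin n → ℤ) (t : ℤ) (i j : Fin n) :
    (x + t • e n i) j = x j + if j = i then t else 0 := by
  simp [e]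

lemma grid_adj_add_smul_e (x : Fin n → ℤ) (l : Fin n) {s : ℤ} (hs : s = 1 ∨ s = -1) :
    (grid n).Adj x (x + s • e n l) := by
  show ∑ i, |x i - (x + s • e n l) i| = 1
  simp only [add_smul_e_apply, sub_add_cancel_left, apply_ite, abs_neg, abs_zero]
  rcases hs with rfl | rfl <;> simp

lemma grid_adj_add_e (x : Fin n → ℤ) (l : Fin n) : (grid n).Adj x (x + e n l) := by
  simpa using grid_adj_add_smul_e x l (Or.inl rfl)

lemma grid_adj_sub_e (x : Fin n → ℤ) (l : Fin n) : (grid n).Adj x (x - e n l) := by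
  simpa [sub_eq_add_neg] using grid_adj_add_smul_e x l (Or.inr rfl)

lemma exists_eq_add_e_or_sub_e_of_adj {x y : Fin n → ℤ} (h : (grid n).Adj x y) :
    ∃ l, y = x + e n l ∨ y = x - e n l := by
  have hsum : ∑ i, |x i - y i| = 1 := h
  obtain ⟨l, hl⟩ : ∃ l, x l ≠ y l := by
    by_contra! hc
    simp [hc] at hsum
  have hsplit := Finset.add_sum_erase Finset.univ (fun i => |x i - y i|) (Finset.mem_univ l)
  have hrest : ∀ i ∈ Finset.univ.erase l, |x i - y i| = 0 := by
    rw [← Finset.sum_eq_zero_iff_of_nonneg fun i _ => abs_nonneg _]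
    have := abs_pos.2 (sub_ne_zero.2 hl)
    have := Finset.sum_nonneg fun i (_ : i ∈ Finset.univ.erase l) => abs_nonneg (x i - y i)
    omega
  have hoff : ∀ i, i ≠ l → y i = x i := fun i hi => by
    simpa [sub_eq_zero, eq_comm] using hrest i (Finset.mem_erase.2 ⟨hi, Finset.mem_univ _⟩)
  have hl1 : |x l - y l| = 1 := by
    rw [Finset.sum_eq_zero hrest] at hsplit
    omega
  have hy : y = x - (x l - y l) • e n l := funext fun i => by
    by_cases hi : i = l
    · subst hi
      simp [e]
    · simp [e, hi, hoff]
  refine ⟨l, ?_⟩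
  rcases abs_eq zero_le_one |>.1 hl1 with h1 | h1 <;> rw [h1] at hy <;> simp [hy]

lemma natAbs_le_nInf (x : Fin n → ℤ) (i : Fin n) : (x i).natAbs ≤ nInf x :=
  Finset.le_sup (f := fun i => (x i).natAbs) (Finset.mem_univ i)

lemma nInf_le_iff {x : Fin n → ℤ} {m : ℕ} : nInf x ≤ m ↔ ∀ i, (x i).natAbs ≤ m := by
  simp [nInf]

lemma exists_natAbs_eq_nInf (hn : 0 < n) (x : Fin n → ℤ) : ∃ m, (x m).natAbs = nInf x := by
  obtain ⟨m, -, hm⟩ := Finset.exists_mem_eq_sup Finset.univ ⟨⟨0, hn⟩, Finset.mem_univ _⟩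
    fun i => (x i).natAbs
  exact ⟨m, hm.symm⟩

lemma nInf_le_add_one_of_adj {x y : Fin n → ℤ} (h : (grid n).Adj x y) :
    nInf x ≤ nInf y + 1 := by
  refine nInf_le_iff.2 fun i => ?_
  have := natAbs_le_nInf y i
  obtain ⟨l, rfl | rfl⟩ := exists_eq_add_e_or_sub_e_of_adj h <;>
  · by_cases hi : i = l <;> simp_all [e] <;> omega

lemma finite_setOf_nInf_le (N : ℕ) : {z : Fin n → ℤ | nInf z ≤ N}.Finite := by
  refine (Set.finite_Icc (fun _ => -(N : ℤ)) fun _ => (N : ℤ)).subset fun z hz => ?_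
  have h := nInf_le_iff.1 hz
  constructor <;> intro i <;> dsimp <;> have := h i <;> omega

def IsEdgeLip {V : Type*} (G : SimpleGraph V) (f : V → ℤ) : Prop :=
  ∀ u v, G.Adj u v → |f u - f v| ≤ 1

namespace IsEdgeLip

variable {V : Type*} {G : SimpleGraph V} {f g : V → ℤ}

lemma const (G : SimpleGraph V) (c : ℤ) : IsEdgeLip G fun _ => c := fun u v _ => by simp

lemma max (hf : IsEdgeLip G f) (hg : IsEdgeLip G g) : IsEdgeLip G fun v => max (f v) (g v) :=
  fun u v h => (abs_max_sub_max_le_max _ _ _ _).trans (max_le (hf u v h) (hg u v h))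

lemma min (hf : IsEdgeLip G f) (hg : IsEdgeLip G g) : IsEdgeLip G fun v => min (f v) (g v) :=
  fun u v h => (abs_min_sub_min_le_max _ _ _ _).trans (max_le (hf u v h) (hg u v h))

lemma sub_const (hf : IsEdgeLip G f) (c : ℤ) : IsEdgeLip G fun v => f v - c :=
  fun u v h => by simpa using hf u v h

lemma lip1 (hconn : G.Connected) (hf : IsEdgeLip G f) : Lip1 G f := by
  intro u v
  obtain ⟨p, hp⟩ := (hconn u v).exists_walk_length_eq_dist
  rw [← hp]
  clear hp
  induction p with
  | nil => simp
  | @cons a b c hab _ ih =>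
    have := hf a b hab
    have := abs_sub_le (f a) (f b) (f c)
    simp only [SimpleGraph.Walk.length_cons]
    push_cast
    omega

end IsEdgeLip

lemma Lip1.isEdgeLip {V : Type*} {G : SimpleGraph V} {f : V → ℤ} (hf : Lip1 G f) :
    IsEdgeLip G f := fun u v h => by
  simpa [SimpleGraph.dist_eq_one_iff_adj.2 h] using hf u v

lemma lap_congr {V : Type*} {G : SimpleGraph V} (w : V → V → ℝ) {f g : V → ℤ} {x : V}
    (hx : f x = g x) (h : ∀ y, G.Adj x y → f y = g y) : lap G w f x = lap G w g x :=
  finsum_mem_congr rfl fun y hy => by rw [hx, h y hy]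

namespace WGraph

variable {V : Type} (W : WGraph V)

def RicciNonneg : Prop := ∀ u v, W.G.Adj u v → 0 ≤ kappa W.G W.w u v

lemma abs_lap_le {f : V → ℤ} (hf : IsEdgeLip W.G f) (u : V) :
    |lap W.G W.w f u| ≤ ∑ v ∈ (W.locFin u).toFinset, W.w u v := by
  rw [lap, finsum_mem_eq_finite_toFinset_sum _ (W.locFin u)]
  refine (Finset.abs_sum_le_sum_abs _ _).trans (Finset.sum_le_sum fun v hv => ?_)
  have hadj : W.G.Adj u v := (W.locFin u).mem_toFinset.1 hv
  have hfuv : |(f v : ℝ) - f u| ≤ 1 := by exact_mod_cast hf v u hadj.symm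
  rw [abs_mul, abs_of_pos (W.pos u v hadj)]
  exact mul_le_of_le_one_right (W.pos u v hadj).le hfuv

lemma kappa_le_lap_sub_lap {u v : V} {f : V → ℤ} (hf : Lip1 W.G f) (hfuv : f v = f u + 1) :
    kappa W.G W.w u v ≤ lap W.G W.w f u - lap W.G W.w f v := by
  refine csInf_le ⟨-(∑ z ∈ (W.locFin u).toFinset, W.w u z) -
      ∑ z ∈ (W.locFin v).toFinset, W.w v z, ?_⟩ ⟨f, hf, hfuv, rfl⟩
  rintro _ ⟨g, hg, -, rfl⟩
  have hu := abs_le.1 (W.abs_lap_le hg.isEdgeLip u)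
  have hv := abs_le.1 (W.abs_lap_le hg.isEdgeLip v)
  linarith [hu.1, hv.2]

end WGraph

def weightAsymm (w : (Fin n → ℤ) → (Fin n → ℤ) → ℝ) (x : Fin n → ℤ) (l : Fin n) : ℝ :=
  w x (x + e n l) - w x (x - e n l)

lemma bijOn_gridNeighbors (x : Fin n → ℤ) :
    Set.BijOn (Sum.elim (x + e n ·) (x - e n ·)) Set.univ {y | (grid n).Adj x y} := by
  refine ⟨?_, ?_, ?_⟩
  · rintro (l | l) -
    exacts [grid_adj_add_e x l, grid_adj_sub_e x l]
  · have hne : ∀ a b : Fin n, (x + e n a) a ≠ (x - e n b) a := fun a b => by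
      simp only [e, Pi.add_apply, Pi.sub_apply]
      split_ifs <;> omega
    rintro (a | a) - (b | b) - hab <;> simp only [Sum.elim_inl, Sum.elim_inr] at hab
    · simpa [e] using congrFun hab a
    · exact absurd (congrFun hab a) (hne a b)
    · exact absurd (congrFun hab b).symm (hne b a)
    · simpa [e] using congrFun hab a
  · intro y hy
    obtain ⟨l, rfl | rfl⟩ := exists_eq_add_e_or_sub_e_of_adj hy
    exacts [⟨Sum.inl l, trivial, rfl⟩, ⟨Sum.inr l, trivial, rfl⟩]

lemma lap_grid_eq_sum (w : (Fin n → ℤ) → (Fin n → ℤ) → ℝ) {f : (Fin n → ℤ) → ℤ}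
    {x : Fin n → ℤ} (a : Fin n → ℤ) (hadd : ∀ l, f (x + e n l) = f x + a l)
    (hsub : ∀ l, f (x - e n l) = f x - a l) :
    lap (grid n) w f x = ∑ l, (a l : ℝ) * weightAsymm w x l := by
  rw [lap, ← finsum_mem_eq_of_bijOn _ (bijOn_gridNeighbors x) fun _ _ => rfl, finsum_mem_univ,
    finsum_eq_sum_of_fintype, Fintype.sum_sum_type, ← Finset.sum_add_distrib]
  refine Finset.sum_congr rfl fun l _ => ?_
  simp only [Sum.elim_inl, Sum.elim_inr, hadd, hsub, weightAsymm]
  push_cast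
  ring

def GridWeight.TendstoOne (Wg : GridWeight n) : Prop :=
  ∀ φ : (Fin n → ℤ) → Fin n → ℤ, (∀ z, (grid n).Adj z (φ z)) →
    Tendsto (fun z => Wg.w z (φ z)) (comap nInf atTop) (𝓝 1)

lemma GridWeight.tendstoOne_of_abs_sub_one_le {Wg : GridWeight n}
    (hflat : ∀ ε : ℝ, 0 < ε → ∃ M : ℕ, ∀ x y, (grid n).Adj x y → M ≤ nInf x →
      |Wg.w x y - 1| ≤ ε) :
    Wg.TendstoOne := fun φ hφ => by
  refine Metric.tendsto_nhds.2 fun ε hε => ?_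
  obtain ⟨M, hM⟩ := hflat (ε / 2) (half_pos hε)
  refine eventually_comap.2 (eventually_atTop.2 ⟨M, fun N hN z hz => ?_⟩)
  rw [Real.dist_eq]
  exact (hM z (φ z) (hφ z) (hz ▸ hN)).trans_lt (half_lt_self hε)

lemma tendsto_weightAsymm {Wg : GridWeight n} (hlim : Wg.TendstoOne) (l : Fin n) :
    Tendsto (fun z => weightAsymm Wg.w z l) (comap nInf atTop) (𝓝 0) := by
  simpa [weightAsymm] using
    (hlim _ fun z => grid_adj_add_e z l).sub (hlim _ fun z => grid_adj_sub_e z l)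

def ray (x : Fin n → ℤ) (s : ℤ) (j : Fin n) (k : ℕ) : Fin n → ℤ := x + ((k : ℤ) * s) • e n j

lemma ray_zero (x : Fin n → ℤ) (s : ℤ) (j : Fin n) : ray x s j 0 = x := by
  simp [ray]

lemma ray_succ (x : Fin n → ℤ) (s : ℤ) (j : Fin n) (k : ℕ) :
    ray x s j (k + 1) = ray x s j k + s • e n j := by
  simp only [ray]
  push_cast
  rw [add_one_mul, add_smul, add_assoc]

lemma ray_apply (x : Fin n → ℤ) (s : ℤ) (j : Fin n) (k : ℕ) (m : Fin n) :
    ray x s j k m = x m + if m = j then (k : ℤ) * s else 0 :=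
  add_smul_e_apply x _ j m

lemma tendsto_ray (x : Fin n → ℤ) (j : Fin n) {s : ℤ} (hs : s = 1 ∨ s = -1) :
    Tendsto (ray x s j) atTop (comap nInf atTop) := by
  refine tendsto_comap_iff.2 (tendsto_atTop_mono (fun k => ?_) (tendsto_sub_atTop_nat (x j).natAbs))
  have := natAbs_le_nInf (ray x s j k) j
  rw [ray_apply, if_pos rfl] at this
  rcases hs with rfl | rfl <;> simp only [Function.comp_apply] <;> omega

lemma weight_eq_of_balanced_along_ray {G : Type*} [AddGroup G] {w : G → G → ℝ}
    (hsymm : ∀ x y, w x y = w y x) {p : ℕ → G} {d : G} (hstep : ∀ k, p (k + 1) = p k + d)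
    (hbal : ∀ k, w (p k) (p k + d) = w (p k) (p k - d)) (k : ℕ) :
    w (p k) (p k + d) = w (p 0) (p 0 + d) := by
  induction k with
  | zero => rfl
  | succ k ih => rw [hbal, hstep, add_sub_cancel_right, hsymm, ih]

lemma dotProduct_sub_add (a x₀ z v : Fin n → ℤ) :
    a ⬝ᵥ (z + v - x₀) = a ⬝ᵥ (z - x₀) + a ⬝ᵥ v := by
  rw [add_sub_right_comm, dotProduct_add]

lemma dotProduct_sub_sub (a x₀ z v : Fin n → ℤ) :
    a ⬝ᵥ (z - v - x₀) = a ⬝ᵥ (z - x₀) - a ⬝ᵥ v := by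
  rw [sub_right_comm, dotProduct_sub]

lemma isEdgeLip_dotProduct {a : Fin n → ℤ} (ha : ∀ l, |a l| ≤ 1) (x₀ : Fin n → ℤ) :
    IsEdgeLip (grid n) fun z => a ⬝ᵥ (z - x₀) := by
  intro z z' h
  obtain ⟨l, rfl | rfl⟩ := exists_eq_add_e_or_sub_e_of_adj h
  · simpa [dotProduct_sub_add, dotProduct_e] using ha l
  · simpa [dotProduct_sub_sub, dotProduct_e] using ha l

lemma isEdgeLip_nInf : IsEdgeLip (grid n) fun z => (nInf z : ℤ) := fun z z' h => by
  have := nInf_le_add_one_of_adj h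
  have := nInf_le_add_one_of_adj h.symm
  show |(nInf z : ℤ) - nInf z'| ≤ 1
  rw [abs_le]
  omega

/-- The affine function `z ↦ a ⬝ᵥ (z - x₀)`, cut off to the constant `-2` on `Q_{r+1}` so that
it extends by `-2` over the finite part of an asymptotically flat graph as a 1-Lipschitz
function. -/
def testFn (r : ℕ) (a x₀ z : Fin n → ℤ) : ℤ :=
  max (-2) (min (a ⬝ᵥ (z - x₀)) (nInf z - (r + 3)))

section testFn

variable {r : ℕ} {a x₀ z : Fin n → ℤ}

lemma isEdgeLip_testFn (ha : ∀ l, |a l| ≤ 1) (r : ℕ) (x₀ : Fin n → ℤ) :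
    IsEdgeLip (grid n) (testFn r a x₀) :=
  (IsEdgeLip.const _ _).max ((isEdgeLip_dotProduct ha x₀).min (isEdgeLip_nInf.sub_const _))

lemma testFn_of_nInf_le (h : nInf z ≤ r + 1) : testFn r a x₀ z = -2 := by
  unfold testFn
  omega

lemma testFn_of_le_nInf (h : r + 5 ≤ nInf z) (hF : |a ⬝ᵥ (z - x₀)| ≤ 2) :
    testFn r a x₀ z = a ⬝ᵥ (z - x₀) := by
  unfold testFn
  rw [abs_le] at hF
  omega

lemma lap_testFn (w : (Fin n → ℤ) → (Fin n → ℤ) → ℝ) (ha : ∀ l, |a l| ≤ 1)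
    (hz : r + 6 ≤ nInf z) (hF : |a ⬝ᵥ (z - x₀)| ≤ 1) :
    lap (grid n) w (testFn r a x₀) z = ∑ l, (a l : ℝ) * weightAsymm w z l := by
  rw [lap_congr w (g := fun z => a ⬝ᵥ (z - x₀)) (testFn_of_le_nInf (by omega) (by omega))
    fun y hy => ?_]
  · exact lap_grid_eq_sum w a (fun l => by rw [dotProduct_sub_add, dotProduct_e])
      fun l => by rw [dotProduct_sub_sub, dotProduct_e]
  · have := nInf_le_add_one_of_adj hy
    refine testFn_of_le_nInf (by omega) ?_
    obtain ⟨l, rfl | rfl⟩ := exists_eq_add_e_or_sub_e_of_adj hy <;>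
    · simp only [dotProduct_sub_add, dotProduct_sub_sub, dotProduct_e]
      have := ha l
      rw [abs_le] at *
      omega

end testFn

/-- The part of `AsympFlatPair` identifying `W` outside `K` with `(ℤⁿ ∖ Q_r, Wg)`. -/
structure GridEnd {V : Type} (n : ℕ) (W : WGraph V) (Wg : GridWeight n) where
  K : Set V
  r : ℕ
  Φ : V → (Fin n → ℤ)
  finite : K.Finite
  bijOn : Set.BijOn Φ Kᶜ {x | r < nInf x}
  adj_iff : ∀ u v, u ∉ K → v ∉ K → (W.G.Adj u v ↔ (grid n).Adj (Φ u) (Φ v))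
  w_eq : ∀ u v, u ∉ K → v ∉ K → W.G.Adj u v → W.w u v = Wg.w (Φ u) (Φ v)
  not_adj : ∀ u v, u ∈ K → v ∉ K → r + 1 < nInf (Φ v) → ¬ W.G.Adj u v

namespace GridEnd

variable {V : Type} {W : WGraph V} {Wg : GridWeight n} (E : GridEnd n W Wg)

lemma exists_finite_forall_far (R : ℕ) :
    ∃ S : Set V, S.Finite ∧ ∀ u ∉ S, u ∉ E.K ∧ R ≤ nInf (E.Φ u) := by
  refine ⟨E.K ∪ (E.Kᶜ ∩ E.Φ ⁻¹' {z | nInf z < R}),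
    E.finite.union (Set.Finite.of_finite_image ?_ (E.bijOn.injOn.mono Set.inter_subset_left)),
    fun u hu => ?_⟩
  · refine (finite_setOf_nInf_le R).subset ?_
    rintro _ ⟨v, ⟨-, hv⟩, rfl⟩
    exact le_of_lt (show nInf (E.Φ v) < R from hv)
  · simp only [Set.mem_union, Set.mem_inter_iff, Set.mem_compl_iff, Set.mem_preimage,
      Set.mem_ofPred_eq, not_or, not_and, not_lt] at hu
    exact ⟨hu.1, hu.2 hu.1⟩

lemma lap_eq {f : (Fin n → ℤ) → ℤ} {g : V → ℤ} (hg : ∀ v ∉ E.K, g v = f (E.Φ v)) {u : V}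
    (hu : u ∉ E.K) (hfar : E.r + 2 ≤ nInf (E.Φ u)) :
    lap W.G W.w g u = lap (grid n) Wg.w f (E.Φ u) := by
  have hnbr : ∀ v, W.G.Adj u v → v ∉ E.K := fun v huv hv =>
    E.not_adj v u hv hu (by omega) huv.symm
  refine finsum_mem_eq_of_bijOn E.Φ ⟨fun v huv => (E.adj_iff u v hu (hnbr v huv)).1 huv,
    fun v hv v' hv' h => E.bijOn.injOn (hnbr v hv) (hnbr v' hv') h, fun z hz => ?_⟩
    fun v huv => by rw [E.w_eq u v hu (hnbr v huv) huv, hg v (hnbr v huv), hg u hu]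
  have := nInf_le_add_one_of_adj hz
  obtain ⟨v, hv, rfl⟩ := E.bijOn.surjOn (show E.r < nInf z by omega)
  exact ⟨v, (E.adj_iff u v hu hv).2 hz, rfl⟩

lemma lap_le_of_kappa_nonneg (hric : W.RicciNonneg)
    {f : (Fin n → ℤ) → ℤ} (hf : IsEdgeLip (grid n) f) {c : ℤ}
    (hc : ∀ z, nInf z ≤ E.r + 1 → f z = c) {x y : Fin n → ℤ} (hxy : (grid n).Adj x y)
    (hx : E.r + 2 ≤ nInf x) (hy : E.r + 2 ≤ nInf y) (hfxy : f y = f x + 1) :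
    lap (grid n) Wg.w f y ≤ lap (grid n) Wg.w f x := by
  classical
  set g : V → ℤ := fun v => if v ∈ E.K then c else f (E.Φ v)
  have hg : ∀ v ∉ E.K, g v = f (E.Φ v) := fun v hv => if_neg hv
  have hgK : ∀ u v, W.G.Adj u v → u ∈ E.K → v ∉ E.K → g v = c := fun u v huv hu hv => by
    rw [hg v hv, hc _ (not_lt.1 fun h => E.not_adj u v hu hv h huv)]
  have hgLip : IsEdgeLip W.G g := by
    intro u v huv
    by_cases hu : u ∈ E.K <;> by_cases hv : v ∈ E.K
    · simp [g, hu, hv]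
    · simp [hgK u v huv hu hv, g, hu]
    · simp [hgK v u huv.symm hv hu, g, hv]
    · rw [hg u hu, hg v hv]
      exact hf _ _ ((E.adj_iff u v hu hv).1 huv)
  obtain ⟨u, hu, rfl⟩ := E.bijOn.surjOn (show E.r < nInf x by omega)
  obtain ⟨v, hv, rfl⟩ := E.bijOn.surjOn (show E.r < nInf y by omega)
  have hκ := (hric u v ((E.adj_iff u v hu hv).2 hxy)).trans
    (W.kappa_le_lap_sub_lap (hgLip.lip1 W.conn) (by rw [hg u hu, hg v hv, hfxy]))
  rw [E.lap_eq hg hu hx, E.lap_eq hg hv hy] at hκ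
  linarith

lemma sum_weightAsymm_le (hric : W.RicciNonneg)
    {a : Fin n → ℤ} (ha : ∀ l, |a l| ≤ 1) {x y : Fin n → ℤ} (hxy : (grid n).Adj x y)
    (hx : E.r + 7 ≤ nInf x) (hay : a ⬝ᵥ (y - x) = 1) :
    ∑ l, (a l : ℝ) * weightAsymm Wg.w y l ≤ ∑ l, (a l : ℝ) * weightAsymm Wg.w x l := by
  have hy := nInf_le_add_one_of_adj hxy
  rw [← lap_testFn Wg.w ha (r := E.r) (x₀ := x) (z := x) (by omega) (by simp),
    ← lap_testFn Wg.w ha (r := E.r) (x₀ := x) (z := y) (by omega) (by rw [hay]; simp)]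
  refine E.lap_le_of_kappa_nonneg hric (isEdgeLip_testFn ha _ _) (fun z => testFn_of_nInf_le)
    hxy (by omega) (by omega) ?_
  rw [testFn_of_le_nInf (by omega) (by rw [hay]; simp), testFn_of_le_nInf (by omega) (by simp),
    hay]
  simp

lemma sum_weightAsymm_nonneg (hric : W.RicciNonneg) (hlim : Wg.TendstoOne)
    {a : Fin n → ℤ} (ha : ∀ l, |a l| ≤ 1) {j : Fin n} {s : ℤ} (hs : s = 1 ∨ s = -1)
    (has : a j * s = 1) {x : Fin n → ℤ} (hfar : ∀ k, E.r + 7 ≤ nInf (ray x s j k)) :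
    0 ≤ ∑ l, (a l : ℝ) * weightAsymm Wg.w x l := by
  have hanti : Antitone fun k => ∑ l, (a l : ℝ) * weightAsymm Wg.w (ray x s j k) l :=
    antitone_nat_of_succ_le fun k => by
      refine E.sum_weightAsymm_le hric ha ?_ (hfar _) ?_ <;> rw [ray_succ]
      · exact grid_adj_add_smul_e _ _ hs
      · rw [add_sub_cancel_left, dotProduct_smul, dotProduct_e, smul_eq_mul, mul_comm, has]
  have hzero : Tendsto (fun k => ∑ l, (a l : ℝ) * weightAsymm Wg.w (ray x s j k) l) atTop
      (𝓝 0) := by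
    have := tendsto_finsetSum Finset.univ fun l _ =>
      ((tendsto_weightAsymm hlim l).comp (tendsto_ray x j hs)).const_mul
        (a l : ℝ)
    simpa only [mul_zero, Finset.sum_const_zero, Function.comp_def] using this
  simpa [ray_zero] using hanti.le_of_tendsto hzero 0

lemma weightAsymm_pair_nonneg (hric : W.RicciNonneg) (hlim : Wg.TendstoOne) {i j : Fin n}
    (hij : i ≠ j) {σ τ : ℤ} (hσ : σ = 1 ∨ σ = -1) (hτ : τ = 1 ∨ τ = -1) {x : Fin n → ℤ}
    (hfar : ∀ k, E.r + 7 ≤ nInf (ray x τ j k)) :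
    0 ≤ σ * weightAsymm Wg.w x i + τ * weightAsymm Wg.w x j := by
  have := E.sum_weightAsymm_nonneg hric hlim (a := σ • e n i + τ • e n j) ?_ hτ ?_ hfar
  · simpa [e, add_mul, Finset.sum_add_distrib, ite_mul] using this
  · intro l
    simp only [Pi.add_apply, Pi.smul_apply, e_apply, smul_eq_mul]
    split_ifs <;> rcases hσ with rfl | rfl <;> rcases hτ with rfl | rfl <;> simp_all
  · rcases hτ with rfl | rfl <;> simp [e, Ne.symm hij]

lemma weightAsymm_eq_zero (hn : 2 ≤ n) (hric : W.RicciNonneg) (hlim : Wg.TendstoOne)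
    {x : Fin n → ℤ} (hx : E.r + 7 ≤ nInf x) (i : Fin n) : weightAsymm Wg.w x i = 0 := by
  obtain ⟨m, hm⟩ := exists_natAbs_eq_nInf (by omega) x
  have : Nontrivial (Fin n) := Fin.nontrivial_iff_two_le.2 hn
  obtain ⟨j, hjm⟩ := exists_ne m
  have hfar : ∀ τ k, E.r + 7 ≤ nInf (ray x τ j k) := fun τ k => by
    have := natAbs_le_nInf (ray x τ j k) m
    rw [ray_apply, if_neg hjm.symm, add_zero] at this
    omega
  have hpair : ∀ i, i ≠ j → weightAsymm Wg.w x i = 0 ∧ weightAsymm Wg.w x j = 0 := by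
    intro i hij
    have key := fun σ τ (hσ : σ = 1 ∨ σ = -1) (hτ : τ = 1 ∨ τ = -1) =>
      E.weightAsymm_pair_nonneg hric hlim hij hσ hτ (hfar τ)
    have h₁ := key 1 1 (by simp) (by simp)
    have h₂ := key 1 (-1) (by simp) (by simp)
    have h₃ := key (-1) 1 (by simp) (by simp)
    have h₄ := key (-1) (-1) (by simp) (by simp)
    push_cast at h₁ h₂ h₃ h₄
    constructor <;> linarith
  by_cases hij : i = j
  · exact hij ▸ (hpair m hjm.symm).2
  · exact (hpair i hij).1

lemma weight_add_smul_e_eq_one (hn : 2 ≤ n) (hric : W.RicciNonneg) (hlim : Wg.TendstoOne)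
    {x : Fin n → ℤ} (hx : E.r + 7 ≤ nInf x) (i : Fin n) {s : ℤ} (hs : s = 1 ∨ s = -1)
    (hsx : 0 ≤ s * x i) : Wg.w x (x + s • e n i) = 1 := by
  have hfar : ∀ k, E.r + 7 ≤ nInf (ray x s i k) := fun k => hx.trans <| nInf_le_iff.2 fun m => by
    have := natAbs_le_nInf (ray x s i k) m
    rw [ray_apply] at this
    split_ifs at this with hm
    · subst hm
      rcases hs with rfl | rfl <;> simp at hsx this <;> omega
    · simpa using this
  have hbal : ∀ k, Wg.w (ray x s i k) (ray x s i k + s • e n i) =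
      Wg.w (ray x s i k) (ray x s i k - s • e n i) := fun k => by
    have := sub_eq_zero.1 (E.weightAsymm_eq_zero hn hric hlim (hfar k) i)
    rcases hs with rfl | rfl <;> simp [this, ← sub_eq_add_neg]
  have hone := (hlim _ fun z => grid_adj_add_smul_e z i hs).comp (tendsto_ray x i hs)
  simp only [Function.comp_def, weight_eq_of_balanced_along_ray Wg.symm (ray_succ x s i) hbal,
    ray_zero] at hone
  exact tendsto_const_nhds_iff.1 hone

lemma weight_eq_one (hn : 2 ≤ n) (hric : W.RicciNonneg) (hlim : Wg.TendstoOne)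
    {x y : Fin n → ℤ} (hx : E.r + 7 ≤ nInf x) (hxy : (grid n).Adj x y) : Wg.w x y = 1 := by
  obtain ⟨i, hy⟩ := exists_eq_add_e_or_sub_e_of_adj hxy
  have hbal := sub_eq_zero.1 (E.weightAsymm_eq_zero hn hric hlim hx i)
  rcases le_total 0 (x i) with hxi | hxi
  · have := E.weight_add_smul_e_eq_one hn hric hlim hx i (Or.inl rfl) (by simpa using hxi)
    rw [one_smul] at this
    rcases hy with rfl | rfl <;> simp_all
  · have := E.weight_add_smul_e_eq_one hn hric hlim hx i (Or.inr rfl) (by simpa using hxi)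
    rw [neg_one_smul, ← sub_eq_add_neg] at this
    rcases hy with rfl | rfl <;> simp_all

end GridEnd

end

/-- for an asymptotically flat graph with nonnegative Ricci curvature,
the edge weights are trivial outside a finite set. -/
theorem ricci_trivial_weights (n : ℕ) (hn : 2 ≤ n) (V : Type) (W : WGraph V)
    (Wg : GridWeight n) (h : AsympFlatPair n W Wg)
    (hric : ∀ u v, W.G.Adj u v → 0 ≤ kappa W.G W.w u v) :
    ∃ Wfin : Set V, Wfin.Finite ∧
      ∀ u v, W.G.Adj u v → u ∉ Wfin → v ∉ Wfin → W.w u v = 1 := by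
  obtain ⟨⟨-, -, hflat, -, -⟩, K, r, Φ, hK, -, hbij, hiff, hw, hnoe⟩ := h
  let E : GridEnd n W Wg := ⟨K, r, Φ, hK, hbij, hiff, hw, hnoe⟩
  have hlim := GridWeight.tendstoOne_of_abs_sub_one_le hflat
  obtain ⟨S, hS, hfar⟩ := E.exists_finite_forall_far (E.r + 7)
  refine ⟨S, hS, fun u v huv hu hv => ?_⟩
  obtain ⟨huK, hu7⟩ := hfar u hu
  have hvK := (hfar v hv).1
  rw [E.w_eq u v huK hvK huv]
  exact E.weight_eq_one hn hric hlim hu7 ((E.adj_iff u v huK hvK).1 huv)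

end PMT
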